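/- Let G be a finite group with subgroups H and K. Then |H\G/K| = (1/|H|) · Σ_{a ∈ H} |G| · |K ∩ C(a)| / (|K| · |C(a)|), where C(a) denotes the conjugacy class of a in G. -/

import Mathlib

/-!
Let `H × K` act on `G` by `(h, k) • g = h * g * k⁻¹`; its orbits are the double cosets.
Burnside's lemma gives `|H\G/K| * |H| * |K| = ∑ (a, k), |Fix (a, k)|`, and `g` is fixed by
`(a, k)` exactly when `g⁻¹ * a * g = k`, so for fixed `a` the fixed points number
`|{g | g⁻¹ * a * g ∈ K}|`. By orbit–stabilizer for conjugation, each element of `C(a) ∩ K` is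
reached from `a` by `|G| / |C(a)|` conjugations.
-/

open MulAction

namespace MulAction

variable {G X : Type*} [Group G] [MulAction G X]

theorem card_smul_mem (x : X) (S : Set X) :
    Nat.card {g : G // g • x ∈ S}
      = Nat.card {y : X // y ∈ orbit G x ∧ y ∈ S} * Nat.card (stabilizer G x) := by
  rw [← Nat.card_prod]
  exact Nat.card_congr <|
    ((orbitProdStabilizerEquivGroup G x).symm.subtypeEquiv fun _ => Iff.rfl).trans <|
      Equiv.prodSubtypeFstEquivSubtypeProd.trans <|
        Equiv.prodCongrLeft fun _ => Equiv.subtypeSubtypeEquivSubtypeInter _ (· ∈ S)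

end MulAction

theorem card_conj_mem_mul_card_conj {G : Type*} [Group G] (a : G) (S : Set G) :
    Nat.card {g : G // g⁻¹ * a * g ∈ S} * Nat.card {g : G // IsConj a g}
      = Nat.card G * Nat.card {g : G // IsConj a g ∧ g ∈ S} := by
  have mem_orbit_iff (g : G) : g ∈ orbit (ConjAct G) a ↔ IsConj a g := by
    rw [ConjAct.mem_orbit_conjAct, isConj_comm]
  have card_conj_mem :
      Nat.card {g : G // g⁻¹ * a * g ∈ S} = Nat.card {c : ConjAct G // c • a ∈ S} :=
    Nat.card_congr <| ((Equiv.inv G).trans ConjAct.toConjAct.toEquiv).subtypeEquiv fun g => by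
      show _ ↔ ConjAct.toConjAct g⁻¹ • a ∈ S
      rw [ConjAct.toConjAct_smul, inv_inv]
  have card_group : Nat.card G
      = Nat.card (orbit (ConjAct G) a) * Nat.card (stabilizer (ConjAct G) a) := by
    rw [← Nat.card_prod, Nat.card_congr (orbitProdStabilizerEquivGroup (ConjAct G) a)]
    rfl
  rw [card_conj_mem, card_smul_mem, card_group]
  simp only [mem_orbit_iff]
  rw [Nat.card_congr (Equiv.subtypeEquivRight mem_orbit_iff)]
  ring

namespace DoubleCoset

variable {G : Type*} [Group G] {H K : Subgroup G}

instance mulAction : MulAction (H × K) G where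
  smul p g := p.1 * g * (p.2 : G)⁻¹
  one_smul g := by change 1 * g * 1⁻¹ = g; group
  mul_smul p q g := by
    change (p.1 * q.1 : G) * g * (p.2 * q.2 : G)⁻¹ = p.1 * (q.1 * g * (q.2 : G)⁻¹) * (p.2 : G)⁻¹
    group

theorem smul_def (p : H × K) (g : G) : p • g = p.1 * g * (p.2 : G)⁻¹ := rfl

theorem setoid_eq_orbitRel : setoid (H : Set G) K = orbitRel (H × K) G := by
  ext a b
  rw [rel_iff, orbitRel_apply, mem_orbit_iff]
  constructor
  · rintro ⟨h, hh, k, hk, rfl⟩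
    exact ⟨(⟨h, hh⟩⁻¹, ⟨k, hk⟩), by simp [smul_def, mul_assoc]⟩
  · rintro ⟨⟨h, k⟩, rfl⟩
    exact ⟨(h : G)⁻¹, H.inv_mem h.2, k, k.2, by rw [smul_def]; group⟩

theorem mem_fixedBy_iff {a : H} {k : K} {g : G} : g ∈ fixedBy G (a, k) ↔ g⁻¹ * a * g = k := by
  rw [mem_fixedBy, smul_def, mul_inv_eq_iff_eq_mul, ← inv_mul_eq_iff_eq_mul, mul_assoc]

theorem sum_card_fixedBy [Fintype K] [Finite G] (a : H) :
    ∑ k : K, Nat.card (fixedBy G (a, k)) = Nat.card {g : G // g⁻¹ * a * g ∈ K} := by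
  rw [← Nat.card_sigma]
  exact Nat.card_congr <|
    (Equiv.sigmaCongrRight fun _ => Equiv.subtypeEquivRight fun _ => mem_fixedBy_iff).trans <|
      Equiv.sigmaSubtypeFiberEquivSubtype _ fun _ => Iff.rfl

variable (H K) in
theorem card_quotient_mul_card_mul_card [Finite G] [Fintype H] [Fintype K] :
    Nat.card (Quotient (H : Set G) K) * (Nat.card H * Nat.card K)
      = ∑ a : H, Nat.card {g : G // g⁻¹ * a * g ∈ K} := by
  classical
  have := Fintype.ofFinite G
  have := Fintype.ofFinite (orbitRel.Quotient (H × K) G)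
  have burnside := sum_card_fixedBy_eq_card_orbits_mul_card_group (H × K) G
  simp only [← Nat.card_eq_fintype_card, Nat.card_prod, Fintype.sum_prod_type,
    sum_card_fixedBy] at burnside
  rw [Quotient, setoid_eq_orbitRel, burnside]

end DoubleCoset

theorem card_doset_eq_class_sum
    {G : Type*} [Group G] [Fintype G] (H K : Subgroup G) [Fintype H] :
    (Nat.card (DoubleCoset.Quotient (H : Set G) (K : Set G)) : ℚ)
      = (1 / (Nat.card H : ℚ))
        * ∑ a : H,
            ((Nat.card G : ℚ) * (Nat.card {g : G // IsConj (a : G) g ∧ g ∈ K} : ℚ))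
            / ((Nat.card K : ℚ) * (Nat.card {g : G // IsConj (a : G) g} : ℚ)) := by
  classical
  have summand_eq (a : H) :
      ((Nat.card G : ℚ) * Nat.card {g : G // IsConj (a : G) g ∧ g ∈ K})
          / (Nat.card K * Nat.card {g : G // IsConj (a : G) g})
        = Nat.card {g : G // g⁻¹ * a * g ∈ K} / Nat.card K := by
    have card_conj_ne_zero : Nat.card {g : G // IsConj (a : G) g} ≠ 0 :=
      Nat.card_ne_zero.mpr ⟨⟨⟨a, IsConj.refl _⟩⟩, inferInstance⟩
    have key := card_conj_mem_mul_card_conj (a : G) (K : Set G)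
    simp only [SetLike.mem_coe] at key
    rw [← Nat.cast_mul, ← key, Nat.cast_mul]
    field_simp
  have burnside := congrArg (Nat.cast : ℕ → ℚ) (DoubleCoset.card_quotient_mul_card_mul_card H K)
  push_cast at burnside
  rw [Finset.sum_congr rfl fun a _ => summand_eq a, ← Finset.sum_div, ← burnside]
  field_simp
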